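/- The list operational-transformation functions satisfy CP1 for two deletes: for any list σ and deletions o1 = Del(p1), o2 = Del(p2) with p1, p2 < length σ, applying o1 then OT(o2, o1) yields the same list as applying o2 then OT(o1, o2), where OT(Del(p1), Del(p2)) = Del(p1) if p1 < p2, Del(p1−1) if p1 > p2, and NOP (identity) if p1 = p2. -/

import Mathlib

/-- Delete the element at position `p` of list `σ`. -/
def delL {U : Type*} (p : ℕ) (σ : List U) : List U :=
  σ.take p ++ σ.drop (p + 1)

/-- Apply the transform of `Del p` against a concurrent `Del q`:
`Del p` if `p < q`, `Del (p-1)` if `p > q`, and NOP (identity) if `p = q`. -/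
def applyDelT {U : Type*} (p q : ℕ) (σ : List U) : List U :=
  if p < q then delL p σ
  else if q < p then delL (p - 1) σ
  else σ

theorem delL_eq_eraseIdx {U : Type*} (p : ℕ) (σ : List U) : delL p σ = σ.eraseIdx p :=
  (List.eraseIdx_eq_take_drop_succ σ p).symm

theorem List.eraseIdx_eraseIdx_of_lt {α : Type*} (l : List α) {i j : ℕ} (h : i < j) :
    (l.eraseIdx j).eraseIdx i = (l.eraseIdx i).eraseIdx (j - 1) := by
  induction l generalizing i j with
  | nil => simp
  | cons a l ih =>
    obtain ⟨j, rfl⟩ : ∃ j', j = j' + 1 := ⟨j - 1, by omega⟩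
    cases i with
    | zero => simp
    | succ i =>
      obtain ⟨j, rfl⟩ : ∃ j', j = j' + 1 := ⟨j - 1, by omega⟩
      simp [ih (Nat.lt_of_succ_lt_succ h)]

theorem applyDelT_delL_of_lt {U : Type*} (σ : List U) {p q : ℕ} (h : p < q) :
    applyDelT q p (delL p σ) = applyDelT p q (delL q σ) := by
  simp only [applyDelT, if_pos h, if_neg h.not_gt, delL_eq_eraseIdx]
  exact (σ.eraseIdx_eraseIdx_of_lt h).symm

theorem cp1_del_del {U : Type*} (σ : List U) (p1 p2 : ℕ) :
    applyDelT p2 p1 (delL p1 σ) = applyDelT p1 p2 (delL p2 σ) := by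
  rcases lt_trichotomy p1 p2 with h | rfl | h
  · exact applyDelT_delL_of_lt σ h
  · rfl
  · exact (applyDelT_delL_of_lt σ h).symm
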